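/- Let q be a power of an odd prime p, e ≥ 2, a ∈ F_{q^e} nonzero, r ≥ 1, f(x) = x^r(x^{q−1} + a), and ℓ = q^{e−1} + ⋯ + q + 1. If the least nonnegative residue of r modulo ℓ equals h·q + 1 for some nonnegative integer h with p ∤ h, then f does not permute F_{q^e}. -/

import Mathlib

/-!
If `f` permutes `F = 𝔽_{q^e}`, then `∑ x, f x ^ k = ∑ x, x ^ k = 0` for every `k < q^e - 1`. Take
`k = 2 (q^{e-1} - 1) = 2 (q - 1) l` with `l = 1 + q + ⋯ + q^{e-2}`, so that `ℓ = q l + 1`.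
Expanding `f x ^ k = x^{rk} (x^{q-1} + a)^k` binomially, the `i`-th term sums to `-a^{k-i} C(k, i)`
if `q^e - 1 ∣ r k + (q - 1) i` and to `0` otherwise; since `q l ≡ -1 (mod ℓ)`, the residue
condition on `r` leaves exactly one such `i ≤ k`, namely `i₀ = ℓ + 2h - 2l`. Finally
`k = 2 p^M - 2` has base-`p` digits `p - 2, p - 1, …, p - 1, 1`, so by Lucas' theorem
`p ∣ C(k, i₀)` only if `i₀ ≡ -1 (mod p)`, which (as `l ≡ ℓ ≡ 1`) means `p ∣ 2h`.
-/

open Finset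

theorem Nat.mul_sub_eq_mul_sub_one_add {p n s : ℕ} (hn : 0 < n) (hs : s ≤ p) :
    p * n - s = p * (n - 1) + (p - s) := by
  have := Nat.le_mul_of_pos_right p hn
  rw [Nat.mul_sub_one]
  omega

theorem Nat.sub_one_mul_geom_sum_add_one {q : ℕ} (hq : 1 ≤ q) (n : ℕ) :
    (q - 1) * ∑ i ∈ range n, q ^ i + 1 = q ^ n := by
  simpa [Nat.sub_add_cancel hq, mul_comm] using geom_sum_mul_add (q - 1) n

theorem ZMod.natCast_geom_sum_succ_of_dvd {p q : ℕ} (hq : p ∣ q) (n : ℕ) :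
    ((∑ i ∈ range (n + 1), q ^ i : ℕ) : ZMod p) = 1 := by
  rw [geom_sum_succ]
  push_cast
  rw [(ZMod.natCast_eq_zero_iff q p).mpr hq, zero_mul, zero_add]

namespace Nat.Prime

variable {p : ℕ}

theorem not_dvd_choose_of_lt (hp : p.Prime) {n k : ℕ} (hn : n < p) (hk : k ≤ n) :
    ¬ p ∣ n.choose k := by
  intro hdvd
  have : p ∣ n ! :=
    Nat.choose_mul_factorial_mul_factorial hk ▸ (hdvd.mul_right _).mul_right _
  exact absurd (hp.dvd_factorial.mp this) (not_le.mpr hn)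

theorem not_dvd_choose_mul_add (hp : p.Prime) {n t k : ℕ} (ht : t < p) (hk : k % p ≤ t)
    (hn : ¬ p ∣ n.choose (k / p)) : ¬ p ∣ (p * n + t).choose k := by
  have : Fact p.Prime := ⟨hp⟩
  have hlucas := Choose.choose_modEq_choose_mod_mul_choose_div_nat (p := p) (n := p * n + t) (k := k)
  rw [Nat.mul_add_mod, Nat.mod_eq_of_lt ht, Nat.mul_add_div hp.pos, Nat.div_eq_of_lt ht,
    add_zero] at hlucas
  rw [hlucas.dvd_iff dvd_rfl, hp.dvd_mul, not_or]
  exact ⟨hp.not_dvd_choose_of_lt ht hk, hn⟩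

-- The base-`p` digits of `b * p ^ M - 1` are `p - 1, …, p - 1, b - 1`.
theorem not_dvd_choose_mul_pow_sub_one (hp : p.Prime) {b : ℕ} (hb : b ≤ p) :
    ∀ {M k : ℕ}, k < b * p ^ M → ¬ p ∣ (b * p ^ M - 1).choose k
  | 0, k, hk => by
    rw [pow_zero, mul_one] at hk ⊢
    exact hp.not_dvd_choose_of_lt (by omega) (by omega)
  | M + 1, k, hk => by
    rw [pow_succ, ← mul_assoc, mul_comm] at hk ⊢
    have hpos : 0 < b * p ^ M := Nat.pos_of_mul_pos_left (Nat.zero_lt_of_lt hk)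
    rw [Nat.mul_sub_eq_mul_sub_one_add hpos hp.one_le]
    exact hp.not_dvd_choose_mul_add (Nat.sub_lt hp.pos one_pos)
      (Nat.le_sub_one_of_lt (Nat.mod_lt k hp.pos))
      (not_dvd_choose_mul_pow_sub_one hp hb (Nat.div_lt_of_lt_mul hk))

theorem not_dvd_choose_mul_pow_sub_two (hp : p.Prime) {b M k : ℕ} (hb : b ≤ p) (hM : M ≠ 0)
    (hk : k + 1 < b * p ^ M) (hkp : ¬ p ∣ k + 1) :
    ¬ p ∣ (b * p ^ M - 2).choose k := by
  obtain ⟨M, rfl⟩ := Nat.exists_eq_succ_of_ne_zero hM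
  rw [pow_succ, ← mul_assoc, mul_comm] at hk ⊢
  have hpos : 0 < b * p ^ M := Nat.pos_of_mul_pos_left (Nat.zero_lt_of_lt hk)
  have hkmod : k % p ≤ p - 2 := by
    have := Nat.mod_lt k hp.pos
    have : k % p ≠ p - 1 := fun hmod ↦
      hkp ⟨k / p + 1, by have := Nat.div_add_mod k p; rw [mul_add]; omega⟩
    omega
  rw [Nat.mul_sub_eq_mul_sub_one_add hpos hp.two_le]
  exact hp.not_dvd_choose_mul_add (Nat.sub_lt hp.pos two_pos) hkmod
    (hp.not_dvd_choose_mul_pow_sub_one hb (Nat.div_lt_of_lt_mul (by omega)))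

end Nat.Prime

theorem Nat.lt_of_mod_mul_add_one_eq_mul_add_one {q l h r : ℕ}
    (hres : r % (q * l + 1) = h * q + 1) : h < l := by
  have := hres ▸ Nat.mod_lt r (Nat.succ_pos (q * l))
  exact Nat.lt_of_mul_lt_mul_right (a := q) (by rw [mul_comm l]; omega)

theorem Nat.dvd_two_mul_mul_add_iff_of_mod_eq {q l h r i : ℕ}
    (hres : r % (q * l + 1) = h * q + 1) (hi : i ≤ 2 * (q - 1) * l) :
    q * l + 1 ∣ 2 * l * r + i ↔ i + 2 * l = q * l + 1 + 2 * h := by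
  have hhl := Nat.lt_of_mod_mul_add_one_eq_mul_add_one hres
  have hq : q ≠ 0 := by rintro rfl; rw [zero_mul, zero_add, Nat.mod_one] at hres; omega
  obtain ⟨c, hc⟩ : ∃ c, c + 2 * h = i + 2 * l := ⟨i + 2 * l - 2 * h, by omega⟩
  -- `q * l ≡ -1` modulo `q * l + 1`, so `2 * l * r ≡ 2 * l * (h * q + 1) ≡ 2 * l - 2 * h`
  have hdecomp : 2 * l * r + i = (q * l + 1) * (2 * l * (r / (q * l + 1)) + 2 * h) + c := by
    have hr := Nat.div_add_mod r (q * l + 1)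
    rw [hres] at hr
    zify at hr hc ⊢
    linear_combination 2 * (l : ℤ) * hr.symm + hc.symm
  have hc2 : c < (q * l + 1) * 2 := by
    have := Nat.le_mul_of_pos_left l (Nat.pos_of_ne_zero hq)
    rw [mul_assoc, Nat.sub_one_mul] at hi
    omega
  rw [hdecomp, Nat.dvd_add_right (dvd_mul_right _ _)]
  constructor
  · rintro ⟨d, rfl⟩
    have hd : d < 2 := Nat.lt_of_mul_lt_mul_left hc2
    interval_cases d <;> omega
  · intro hi₀
    exact ⟨1, by omega⟩

theorem Nat.le_two_mul_sub_one_mul_of_add_two_mul_eq {q l h i : ℕ} (hq : 2 ≤ q) (hhl : h < l)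
    (hi : i + 2 * l = q * l + 1 + 2 * h) : i ≤ 2 * (q - 1) * l := by
  have : 2 * l ≤ q * l := Nat.mul_le_mul_right l hq
  rw [mul_assoc, Nat.sub_one_mul]
  omega

theorem Nat.filter_range_dvd_eq_singleton {q l h r i₀ : ℕ} (hq : 2 ≤ q)
    (hres : r % (q * l + 1) = h * q + 1) (hi₀ : i₀ + 2 * l = q * l + 1 + 2 * h) :
    (range (2 * (q - 1) * l + 1)).filter
      (fun i ↦ (q - 1) * (q * l + 1) ∣ r * (2 * (q - 1) * l) + (q - 1) * i) = {i₀} := by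
  have hi₀k := Nat.le_two_mul_sub_one_mul_of_add_two_mul_eq hq
    (Nat.lt_of_mod_mul_add_one_eq_mul_add_one hres) hi₀
  ext i
  simp only [mem_filter, mem_range, mem_singleton, Nat.lt_succ_iff]
  rw [show r * (2 * (q - 1) * l) + (q - 1) * i = (q - 1) * (2 * l * r + i) by ring,
    Nat.mul_dvd_mul_iff_left (by omega)]
  constructor
  · rintro ⟨hik, hdvd⟩
    have := (Nat.dvd_two_mul_mul_add_iff_of_mod_eq hres hik).mp hdvd
    omega
  · rintro rfl
    exact ⟨hi₀k, (Nat.dvd_two_mul_mul_add_iff_of_mod_eq hres hi₀k).mpr hi₀⟩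

theorem Nat.not_dvd_add_one_of_add_two_mul_eq {p q l h i : ℕ} (hp : Odd p) (hq : p ∣ q)
    (hl : (l : ZMod p) = 1) (hh : ¬ p ∣ h) (hi : i + 2 * l = q * l + 1 + 2 * h) :
    ¬ p ∣ i + 1 := by
  intro hdvd
  refine hh ((Nat.coprime_two_right.mpr hp).dvd_of_dvd_mul_left ?_)
  rw [← ZMod.natCast_eq_zero_iff] at hdvd hq ⊢
  have := congrArg (Nat.cast : ℕ → ZMod p) hi
  push_cast at this hdvd ⊢
  rw [hq, hl] at this
  linear_combination hdvd - this

namespace FiniteField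

variable {K : Type*} [Field K] [Fintype K]

theorem sum_pow_of_ne_zero {N : ℕ} (hN : N ≠ 0) :
    ∑ x : K, x ^ N = if Fintype.card K - 1 ∣ N then -1 else 0 := by
  classical
  rw [← sum_pow_units, eq_comm]
  refine Fintype.sum_of_injective (fun x : Kˣ ↦ (x : K)) Units.val_injective _ _ ?_ fun _ ↦ rfl
  intro x hx
  obtain rfl : x = 0 := by
    by_contra h
    exact hx ⟨Units.mk0 x h, rfl⟩
  exact zero_pow hN

theorem sum_pow_mul_pow_add (a : K) {r s k : ℕ} (hr : r ≠ 0) (hk : k ≠ 0) :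
    ∑ x : K, (x ^ r * (x ^ s + a)) ^ k =
      -∑ i ∈ (range (k + 1)).filter (fun i ↦ Fintype.card K - 1 ∣ r * k + s * i),
        a ^ (k - i) * k.choose i := by
  have hexpand (x : K) : (x ^ r * (x ^ s + a)) ^ k =
      ∑ i ∈ range (k + 1), x ^ (r * k + s * i) * (a ^ (k - i) * k.choose i) := by
    rw [mul_pow, add_pow, mul_sum]
    refine sum_congr rfl fun i _ ↦ ?_
    rw [pow_add, pow_mul, pow_mul]
    ring
  simp_rw [hexpand]
  rw [sum_comm, sum_filter, ← sum_neg_distrib]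
  refine sum_congr rfl fun i _ ↦ ?_
  rw [← sum_mul, sum_pow_of_ne_zero (by positivity)]
  split_ifs <;> simp

theorem not_bijective_of_sum_pow_ne_zero {f : K → K} {k : ℕ} (hk : k < Fintype.card K - 1)
    (hsum : ∑ x, f x ^ k ≠ 0) : ¬ Function.Bijective f := fun hf ↦
  hsum <| (hf.sum_comp (· ^ k)).trans (sum_pow_lt_card_sub_one K k hk)

end FiniteField

theorem stmt_13_general (p m q e : ℕ) (hp : p.Prime) (hpodd : Odd p) (hm : 0 < m)
    (hq : q = p ^ m) (he : 2 ≤ e)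
    {F : Type*} [Field F] [Fintype F] (hF : Fintype.card F = q ^ e)
    (a : F) (ha : a ≠ 0) (r : ℕ)
    (ℓ : ℕ) (hℓ : ℓ = ∑ i ∈ Finset.range e, q ^ i)
    (h : ℕ) (hres : r % ℓ = h * q + 1) (hnd : ¬ p ∣ h) :
    ¬ Function.Bijective (fun x : F => x ^ r * (x ^ (q - 1) + a)) := by
  obtain ⟨E, rfl⟩ : ∃ E, e = E + 2 := ⟨e - 2, by omega⟩
  have hq2 : 2 ≤ q := hq ▸ Nat.one_lt_pow hm.ne' hp.one_lt
  have hpq : p ∣ q := hq ▸ dvd_pow_self p hm.ne'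
  have : Fact p.Prime := ⟨hp⟩
  have : CharP F p := charP_of_card_eq_prime_pow (f := m * (E + 2)) (by rw [hF, hq, pow_mul])
  have hcard : Fintype.card F - 1 = (q - 1) * ℓ := by
    rw [hF, ← Nat.sub_one_mul_geom_sum_add_one (by omega), hℓ, Nat.add_sub_cancel]
  have hQ : (q - 1) * ∑ i ∈ range (E + 1), q ^ i + 1 = p ^ (m * (E + 1)) := by
    rw [pow_mul, ← hq]
    exact Nat.sub_one_mul_geom_sum_add_one (by omega) _
  have hl₁ := ZMod.natCast_geom_sum_succ_of_dvd hpq E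
  -- `l = 1 + q + ⋯ + q ^ (e - 2)`, so that `ℓ = q * l + 1`
  rw [hℓ, geom_sum_succ] at hres hcard
  generalize ∑ i ∈ range (E + 1), q ^ i = l at hQ hl₁ hres hcard
  have hhl := Nat.lt_of_mod_mul_add_one_eq_mul_add_one hres
  have h2l : 2 * l ≤ q * l := Nat.mul_le_mul_right l hq2
  obtain ⟨i₀, hi₀⟩ : ∃ i₀, i₀ + 2 * l = q * l + 1 + 2 * h :=
    ⟨q * l + 1 + 2 * h - 2 * l, by omega⟩
  have hi₀k := Nat.le_two_mul_sub_one_mul_of_add_two_mul_eq hq2 hhl hi₀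
  have hk : 2 * (q - 1) * l = 2 * p ^ (m * (E + 1)) - 2 := by rw [mul_assoc]; omega
  refine FiniteField.not_bijective_of_sum_pow_ne_zero (k := 2 * (q - 1) * l) ?_ ?_
  · rw [hcard, mul_comm 2, mul_assoc]
    exact Nat.mul_lt_mul_of_pos_left (by omega) (by omega)
  rw [FiniteField.sum_pow_mul_pow_add a (by rintro rfl; simp at hres)
    (Nat.mul_ne_zero (by omega) (by omega)), hcard,
    Nat.filter_range_dvd_eq_singleton hq2 hres hi₀, sum_singleton, neg_ne_zero]
  refine mul_ne_zero (pow_ne_zero _ ha) ?_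
  rw [Ne, CharP.cast_eq_zero_iff F p, hk]
  exact hp.not_dvd_choose_mul_pow_sub_two hp.two_le (by positivity) (by omega)
    (Nat.not_dvd_add_one_of_add_two_mul_eq hpodd hpq hl₁ hnd hi₀)

/-- For `q` a power of an odd prime `p`, if the least nonnegative residue of `r`
modulo `ℓ = q^{e-1} + ⋯ + q + 1` equals `hq + 1` with `p ∤ h`, then
`f(x) = x^r (x^{q-1} + a)` does not permute `F_{q^e}`. -/
theorem stmt_13 (p m q e : ℕ) (hp : p.Prime) (hpodd : Odd p) (hm : 0 < m)
    (hq : q = p ^ m) (he : 2 ≤ e)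
    {F : Type*} [Field F] [Fintype F] (hF : Fintype.card F = q ^ e)
    (a : F) (ha : a ≠ 0) (r : ℕ) (hr : 1 ≤ r)
    (ℓ : ℕ) (hℓ : ℓ = ∑ i ∈ Finset.range e, q ^ i)
    (h : ℕ) (hres : r % ℓ = h * q + 1) (hnd : ¬ p ∣ h) :
    ¬ Function.Bijective (fun x : F => x ^ r * (x ^ (q - 1) + a)) :=
  stmt_13_general p m q e hp hpodd hm hq he hF a ha r ℓ hℓ h hres hnd
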